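/- If G is a square-stable graph, then G is a König-Egerváry graph if and only if G² is a König-Egerváry graph. -/

import Mathlib

open SimpleGraph

/-- The square of a graph: vertices adjacent iff at distance 1 or 2 in `G`. -/
def SimpleGraph.sq {V : Type*} (G : SimpleGraph V) : SimpleGraph V where
  Adj u v := G.Adj u v ∨ (u ≠ v ∧ ∃ w, G.Adj u w ∧ G.Adj w v)
  symm := by
    constructor
    rintro u v (h | ⟨hne, w, h1, h2⟩)
    · exact Or.inl h.symm
    · exact Or.inr ⟨hne.symm, w, h2.symm, h1.symm⟩
  loopless := by
    constructor
    rintro u (h | ⟨hne, _⟩)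
    · exact G.irrefl h
    · exact hne rfl

/-- A stable (independent) set of vertices. -/
def SimpleGraph.IsStableSet {V : Type*} (G : SimpleGraph V) (s : Set V) : Prop :=
  s.Pairwise fun u v => ¬ G.Adj u v

/-- The stability (independence) number. -/
noncomputable def SimpleGraph.alpha {V : Type*} (G : SimpleGraph V) : ℕ :=
  sSup {n | ∃ s : Finset V, G.IsStableSet ↑s ∧ s.card = n}

/-- The matching number: maximum number of edges in a matching. -/
noncomputable def SimpleGraph.mu {V : Type*} (G : SimpleGraph V) : ℕ :=
  sSup {n | ∃ M : G.Subgraph, M.IsMatching ∧ M.edgeSet.ncard = n}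

/-- `s` is a maximum stable set. -/
def SimpleGraph.IsMaximumStable {V : Type*} (G : SimpleGraph V) (s : Finset V) : Prop :=
  G.IsStableSet ↑s ∧ s.card = G.alpha

/-- `s` is a maximal stable set. -/
def SimpleGraph.IsMaximalStable {V : Type*} (G : SimpleGraph V) (s : Finset V) : Prop :=
  G.IsStableSet ↑s ∧ ∀ v ∉ s, ¬ G.IsStableSet (insert v (↑s : Set V))

/-- `G` is square-stable if `α(G) = α(G²)`. -/
def SimpleGraph.SquareStable {V : Type*} (G : SimpleGraph V) : Prop :=
  G.alpha = G.sq.alpha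

/-- König-Egerváry graph: `α(G) + μ(G) = |V(G)|`. -/
def SimpleGraph.KonigEgervary {V : Type*} [Fintype V] (G : SimpleGraph V) : Prop :=
  G.alpha + G.mu = Fintype.card V

/-- A pendant vertex: a vertex of degree 1. -/
def SimpleGraph.Pendant {V : Type*} (G : SimpleGraph V) (v : V) : Prop :=
  (G.neighborSet v).ncard = 1

/-- `G` has a perfect matching consisting of pendant edges. -/
def SimpleGraph.HasPendantPerfectMatching {V : Type*} (G : SimpleGraph V) : Prop :=
  ∃ M : G.Subgraph, M.IsPerfectMatching ∧ ∀ e ∈ M.edgeSet, ∃ v ∈ e, G.Pendant v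

/-- A simplicial vertex: its neighborhood induces a clique. -/
def SimpleGraph.IsSimplicial {V : Type*} (G : SimpleGraph V) (v : V) : Prop :=
  G.IsClique (G.neighborSet v)

/-- `G` is well-covered: every maximal stable set is maximum. -/
def SimpleGraph.WellCovered {V : Type*} (G : SimpleGraph V) : Prop :=
  ∀ s : Finset V, G.IsMaximalStable s → s.card = G.alpha

/-- `G` is very well-covered: well-covered, no isolated vertices, `|V| = 2α`. -/
def SimpleGraph.VeryWellCovered {V : Type*} [Fintype V] (G : SimpleGraph V) : Prop :=
  G.WellCovered ∧ (∀ v : V, (G.neighborSet v).ncard ≠ 0) ∧ Fintype.card V = 2 * G.alpha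

/-! Let `S` be a maximum stable set of `G²`. By square-stability it is also maximum in `G`, so
every vertex outside `S` has a neighbour in `S`, and only one, since `S` is stable in `G²`.
Always `α + μ ≤ |V|` (each matching edge leaves `S`) and `μ(G) ≤ μ(G²)`, which gives the forward
direction. Conversely, if `G²` is König–Egerváry, a maximum matching of `G²` matches `Sᶜ`
injectively into `S`. Each partner `a` of `b ∉ S` is the `S`-neighbour of `b` or of the middle
vertex of a path `b - w - a`, with `w ∉ S`; hence the map sending a vertex of `Sᶜ` to its
`S`-neighbour is injective, and its edges form a matching of `G` with `|V| - α(G)` edges. -/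

theorem Function.Injective.injective_of_range_subset {α β : Type*} [Finite α] {f g : α → β}
    (hg : g.Injective) (h : Set.range g ⊆ Set.range f) : f.Injective := by
  have hcard : Nat.card α ≤ Nat.card (Set.range f) :=
    (Nat.card_range_of_injective hg).symm.le.trans (Nat.card_mono (Set.toFinite _) h)
  exact Set.rangeFactorization_bijective.mp
    (Set.rangeFactorization_surjective.bijective_of_nat_card_le hcard)

namespace SimpleGraph

variable {V : Type*} {G H : SimpleGraph V}

theorem le_sq (G : SimpleGraph V) : G ≤ G.sq := fun _ _ => Or.inl

theorem IsStableSet.anti {s : Set V} (h : G ≤ H) (hs : H.IsStableSet s) : G.IsStableSet s :=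
  hs.mono' fun _ _ hn hadj => hn (h hadj)

theorem IsStableSet.notMem_or_notMem {s : Set V} (hs : G.IsStableSet s) {u v : V}
    (h : G.Adj u v) : u ∉ s ∨ v ∉ s := by
  by_contra! huv
  exact hs huv.1 huv.2 h.ne h

section Fintype

variable [Fintype V]

theorem bddAbove_stableSet_card (G : SimpleGraph V) :
    BddAbove {n | ∃ s : Finset V, G.IsStableSet ↑s ∧ s.card = n} :=
  ⟨Fintype.card V, by rintro _ ⟨s, -, rfl⟩; exact s.card_le_univ⟩

theorem exists_isStableSet_card_eq_alpha (G : SimpleGraph V) :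
    ∃ s : Finset V, G.IsStableSet ↑s ∧ s.card = G.alpha :=
  Nat.sSup_mem (s := {n | ∃ s : Finset V, G.IsStableSet ↑s ∧ s.card = n})
    ⟨0, ∅, by simp [IsStableSet]⟩ G.bddAbove_stableSet_card

theorem IsStableSet.card_le_alpha {s : Finset V} (hs : G.IsStableSet ↑s) : s.card ≤ G.alpha :=
  le_csSup G.bddAbove_stableSet_card ⟨s, hs, rfl⟩

theorem bddAbove_matching_ncard (G : SimpleGraph V) :
    BddAbove {n | ∃ M : G.Subgraph, M.IsMatching ∧ M.edgeSet.ncard = n} :=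
  ⟨Nat.card (Sym2 V), by rintro _ ⟨M, -, rfl⟩; exact Set.ncard_le_card _⟩

theorem exists_isMatching_ncard_eq_mu (G : SimpleGraph V) :
    ∃ M : G.Subgraph, M.IsMatching ∧ M.edgeSet.ncard = G.mu :=
  Nat.sSup_mem (s := {n | ∃ M : G.Subgraph, M.IsMatching ∧ M.edgeSet.ncard = n})
    ⟨0, ⊥, by simp [Subgraph.IsMatching]⟩ G.bddAbove_matching_ncard

theorem Subgraph.IsMatching.ncard_le_mu {M : G.Subgraph} (hM : M.IsMatching) :
    M.edgeSet.ncard ≤ G.mu :=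
  le_csSup G.bddAbove_matching_ncard ⟨M, hM, rfl⟩

theorem mu_mono (h : G ≤ H) : G.mu ≤ H.mu := by
  obtain ⟨M, hM, hcard⟩ := G.exists_isMatching_ncard_eq_mu
  have hmap : (M.map (Hom.ofLE h)).edgeSet = M.edgeSet := by simp [Subgraph.edgeSet_map]
  exact hcard ▸ hmap ▸ (hM.map_ofLE h).ncard_le_mu

end Fintype

namespace Subgraph

variable {M : G.Subgraph} {S : Set V}

theorem IsMatching.eq_of_mem_of_mem (hM : M.IsMatching) {e e' : Sym2 V} (he : e ∈ M.edgeSet)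
    (he' : e' ∈ M.edgeSet) {v : V} (hv : v ∈ e) (hv' : v ∈ e') : e = e' := by
  obtain ⟨w, rfl⟩ := Sym2.mem_iff_exists.mp hv
  obtain ⟨w', rfl⟩ := Sym2.mem_iff_exists.mp hv'
  rw [hM.eq_of_adj_left (Subgraph.mem_edgeSet.mp he) (Subgraph.mem_edgeSet.mp he')]

theorem IsMatching.exists_injective_mem_compl (hM : M.IsMatching) (hS : G.IsStableSet S) :
    ∃ φ : M.edgeSet → ↥Sᶜ, φ.Injective ∧ ∀ e : M.edgeSet, (φ e : V) ∈ (e : Sym2 V) := by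
  have hout : ∀ e : M.edgeSet, ∃ v ∈ (e : Sym2 V), v ∉ S := by
    rintro ⟨e, he⟩
    induction e with
    | _ u v =>
      rcases hS.notMem_or_notMem (M.adj_sub he) with hu | hv
      exacts [⟨u, Sym2.mem_mk_left _ _, hu⟩, ⟨v, Sym2.mem_mk_right _ _, hv⟩]
  choose φ hφe hφS using hout
  refine ⟨fun e => ⟨φ e, hφS e⟩, fun e e' h => ?_, hφe⟩
  have hφ : φ e = φ e' := congrArg Subtype.val h
  have hv : φ e ∈ (e' : Sym2 V) := hφ ▸ hφe e'
  exact Subtype.ext (hM.eq_of_mem_of_mem e.2 e'.2 (hφe e) hv)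

theorem IsMatching.ncard_edgeSet_le_ncard_compl [Finite V] (hM : M.IsMatching)
    (hS : G.IsStableSet S) : M.edgeSet.ncard ≤ Sᶜ.ncard := by
  obtain ⟨φ, hφ, -⟩ := hM.exists_injective_mem_compl hS
  simpa only [Nat.card_coe_set_eq] using Nat.card_le_card_of_injective φ hφ

theorem IsMatching.exists_adj_mem_of_ncard_compl_le [Finite V] (hM : M.IsMatching)
    (hS : G.IsStableSet S) (hcard : Sᶜ.ncard ≤ M.edgeSet.ncard) :
    ∀ b ∉ S, ∃ a ∈ S, M.Adj b a := by
  obtain ⟨φ, hφ, hmem⟩ := hM.exists_injective_mem_compl hS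
  have hsurj := (hφ.bijective_of_nat_card_le (by simpa only [Nat.card_coe_set_eq])).2
  intro b hb
  obtain ⟨e, he⟩ := hsurj ⟨b, hb⟩
  obtain ⟨a, hea⟩ := Sym2.mem_iff_exists.mp (he ▸ hmem e)
  have hadj : M.Adj b a := by simpa only [hea, Subgraph.mem_edgeSet] using e.2
  refine ⟨a, by_contra fun ha => hadj.ne ?_, hadj⟩
  obtain ⟨e', he'⟩ := hsurj ⟨a, ha⟩
  have ha' : a ∈ (e' : Sym2 V) := by simpa only [he'] using hmem e'
  have hee' : e = e' := Subtype.ext (hM.eq_of_mem_of_mem e.2 e'.2 (hea ▸ Sym2.mem_mk_right _ _) ha')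
  exact congrArg Subtype.val (he.symm.trans (hee' ▸ he'))

end Subgraph

theorem alpha_add_mu_le_card [Fintype V] (G : SimpleGraph V) :
    G.alpha + G.mu ≤ Fintype.card V := by
  obtain ⟨S, hS, hScard⟩ := G.exists_isStableSet_card_eq_alpha
  obtain ⟨M, hM, hMcard⟩ := G.exists_isMatching_ncard_eq_mu
  have hsplit := Set.ncard_add_ncard_compl (S : Set V)
  rw [Set.ncard_coe_finset, Nat.card_eq_fintype_card] at hsplit
  have := hM.ncard_edgeSet_le_ncard_compl hS
  omega

theorem ncard_compl_le_mu [Fintype V] {S : Set V} (f : ↥Sᶜ → V) (hf : f.Injective)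
    (hfS : ∀ b, f b ∈ S) (hadj : ∀ b : ↥Sᶜ, G.Adj b (f b)) : Sᶜ.ncard ≤ G.mu := by
  have hne : ∀ b c : ↥Sᶜ, (b : V) ≠ f c := fun b c h => b.2 (h ▸ hfS c)
  have hmatch : (⨆ b, G.subgraphOfAdj (hadj b)).IsMatching := by
    refine Subgraph.IsMatching.iSup (fun b => .subgraphOfAdj _) fun b c hbc => ?_
    simp only [support_subgraphOfAdj, Set.disjoint_insert_left, Set.disjoint_insert_right,
      Set.disjoint_singleton, Set.mem_insert_iff, Set.mem_singleton_iff, not_or]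
    exact ⟨⟨Subtype.coe_ne_coe.mpr hbc.symm, hne c b⟩, hne b c, hf.ne hbc⟩
  have hedges : (⨆ b, G.subgraphOfAdj (hadj b)).edgeSet = Set.range fun b => s(↑b, f b) := by
    simp only [Subgraph.edgeSet_iSup, edgeSet_subgraphOfAdj, Set.range_eq_iUnion]
  have hinj : (fun b : ↥Sᶜ => s(↑b, f b)).Injective := by
    intro b c hbc
    rcases Sym2.eq_iff.mp hbc with ⟨h, -⟩ | ⟨h, -⟩
    exacts [Subtype.ext h, (hne b c h).elim]
  rw [← Nat.card_coe_set_eq, ← Nat.card_range_of_injective hinj, Nat.card_coe_set_eq, ← hedges]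
  exact hmatch.ncard_le_mu

theorem IsStableSet.eq_of_adj_of_sq {S : Set V} (hS : G.sq.IsStableSet S) {a a' b : V}
    (ha : a ∈ S) (ha' : a' ∈ S) (h : G.Adj b a) (h' : G.Adj b a') : a = a' :=
  by_contra fun hne => hS ha ha' hne (Or.inr ⟨hne, b, h.symm, h'⟩)

theorem IsStableSet.exists_adj_of_card_eq_alpha [Fintype V] {S : Finset V}
    (hS : G.IsStableSet ↑S) (hcard : S.card = G.alpha) {b : V} (hb : b ∉ S) :
    ∃ a ∈ S, G.Adj b a := by
  classical
  by_contra! hnadj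
  have hins : G.IsStableSet ↑(insert b S) := by
    rw [Finset.coe_insert, IsStableSet, Set.pairwise_insert]
    exact ⟨hS, fun a ha _ => ⟨hnadj a ha, fun h => hnadj a ha h.symm⟩⟩
  have := hins.card_le_alpha
  rw [Finset.card_insert_of_notMem hb] at this
  omega

theorem IsStableSet.exists_notMem_adj_of_sq_adj {S : Set V} (hS : G.IsStableSet S) {a b : V}
    (ha : a ∈ S) (hb : b ∉ S) (h : G.sq.Adj b a) : ∃ w ∉ S, G.Adj w a := by
  rcases h with h | ⟨-, w, -, hwa⟩
  · exact ⟨b, hb, h⟩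
  · exact ⟨w, fun hw => hS hw ha hwa.ne hwa, hwa⟩

variable [Fintype V]

theorem KonigEgervary.sq (hss : G.SquareStable) (hKE : G.KonigEgervary) : G.sq.KonigEgervary :=
  le_antisymm G.sq.alpha_add_mu_le_card
    (hKE ▸ hss ▸ Nat.add_le_add_left (mu_mono G.le_sq) _)

theorem KonigEgervary.of_sq (hss : G.SquareStable) (hKE : G.sq.KonigEgervary) :
    G.KonigEgervary := by
  obtain ⟨S, hS, hScard⟩ := G.sq.exists_isStableSet_card_eq_alpha
  have hSG : G.IsStableSet ↑S := hS.anti G.le_sq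
  have hsplit := Set.ncard_add_ncard_compl (S : Set V)
  rw [Set.ncard_coe_finset, Nat.card_eq_fintype_card] at hsplit
  obtain ⟨M, hM, hMcard⟩ := G.sq.exists_isMatching_ncard_eq_mu
  have hσ := hM.exists_adj_mem_of_ncard_compl_le hS (by unfold KonigEgervary at hKE; omega)
  choose σ hσS hσM using fun b : ↥(↑S : Set V)ᶜ => hσ b b.2
  have hσinj : σ.Injective := fun b c h => Subtype.ext (hM.eq_of_adj_right (hσM b) (h ▸ hσM c))
  have hα : S.card = G.alpha := hScard.trans hss.symm
  choose F hFS hFadj using fun b : ↥(↑S : Set V)ᶜ => hSG.exists_adj_of_card_eq_alpha hα b.2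
  have hrange : Set.range σ ⊆ Set.range F := by
    rintro _ ⟨b, rfl⟩
    obtain ⟨w, hw, hwa⟩ := hSG.exists_notMem_adj_of_sq_adj (hσS b) b.2 (M.adj_sub (hσM b))
    exact ⟨⟨w, hw⟩, hS.eq_of_adj_of_sq (hFS _) (hσS b) (hFadj _) hwa⟩
  have hμ := ncard_compl_le_mu F (hσinj.injective_of_range_subset hrange) hFS hFadj
  have := G.alpha_add_mu_le_card
  unfold KonigEgervary
  omega

end SimpleGraph

theorem stmt19_general {V : Type*} [Fintype V] (G : SimpleGraph V)
    (hss : G.SquareStable) :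
    G.KonigEgervary ↔ G.sq.KonigEgervary :=
  ⟨.sq hss, .of_sq hss⟩

theorem stmt19 {V : Type*} [Fintype V] (G : SimpleGraph V)
    (h2 : 2 ≤ Fintype.card V) (hss : G.SquareStable) :
    G.KonigEgervary ↔ G.sq.KonigEgervary :=
  stmt19_general G hss
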